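/- arXiv:2103.10172 — 7 statements merged into one kernel-verified Lean document; each statement's English description precedes it below -/
import Mathlib

section
/- If G is a finite simple graph with at least one edge and x is a vertex of G that is not isolated, then there exists a Z-Grundy dominating sequence of G (that is, a Z-sequence of maximum length) whose set of vertices contains x. -/
/-- A Z-sequence in a graph `G`: a list of distinct vertices such that each vertex
has a neighbor not contained in the closed neighborhood of any earlier vertex. -/
def IsZSeq {V : Type*} (G : SimpleGraph V) (l : List V) : Prop :=
  l.Nodup ∧ ∀ i : Fin l.length, ∃ w : V, G.Adj (l.get i) w ∧
    ∀ j : Fin l.length, (j : ℕ) < (i : ℕ) → w ≠ l.get j ∧ ¬ G.Adj (l.get j) w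

/-- A Z-Grundy dominating sequence: a Z-sequence of maximum length. -/
def IsZGrundySeq {V : Type*} (G : SimpleGraph V) (l : List V) : Prop :=
  IsZSeq G l ∧ ∀ l' : List V, IsZSeq G l' → l'.length ≤ l.length

/-!
Take a Z-Grundy sequence `v` with witnesses `w`, where `w i` is a neighbour of `v i` outside the
closed neighbourhoods of the earlier `v j`. This condition is symmetric under swapping `v` with `w`
and reversing the order, so the reversed witnesses again form a Z-Grundy sequence. If `x ∉ v`
and `v i` is the first vertex of `v` adjacent to `x`, then `x` may serve as the witness of `v i`,
and reversing gives a Z-Grundy sequence containing `x`. If no vertex of `v` is adjacent to `x`,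
any neighbour of `x` extends `v`, with witness `x`, contradicting maximality.
-/

section

variable {V : Type*} (G : SimpleGraph V)

def IsZWitness {k : ℕ} (v w : Fin k → V) : Prop :=
  (∀ i, G.Adj (v i) (w i)) ∧ ∀ i j, j < i → w i ≠ v j ∧ ¬ G.Adj (v j) (w i)

namespace IsZWitness

variable {G} {k : ℕ} {v w : Fin k → V}

theorem injective (h : IsZWitness G v w) : Function.Injective v := by
  intro i j hij
  by_contra hne
  rcases lt_or_gt_of_ne hne with hlt | hlt
  · exact (h.2 j i hlt).2 (hij ▸ h.1 j)
  · exact (h.2 i j hlt).2 (hij ▸ h.1 i)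

theorem rev (h : IsZWitness G v w) : IsZWitness G (w ∘ Fin.rev) (v ∘ Fin.rev) := by
  refine ⟨fun i => (h.1 i.rev).symm, fun i j hji => ?_⟩
  obtain ⟨hne, hadj⟩ := h.2 j.rev i.rev (Fin.rev_lt_rev.mpr hji)
  exact ⟨hne.symm, fun h => hadj h.symm⟩

theorem isZSeq (h : IsZWitness G v w) : IsZSeq G (List.ofFn v) := by
  refine ⟨List.nodup_ofFn.mpr h.injective, fun i => ⟨w (Fin.cast (by simp) i), ?_, ?_⟩⟩
  · simpa only [List.get_ofFn] using h.1 _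
  · intro j hji
    simpa only [List.get_ofFn] using h.2 _ (Fin.cast (by simp) j) hji

theorem update (h : IsZWitness G v w) {i₀ : Fin k} {x : V}
    (hadj : G.Adj (v i₀) x) (hx : ∀ j < i₀, x ≠ v j ∧ ¬ G.Adj (v j) x) :
    IsZWitness G v (Function.update w i₀ x) := by
  refine ⟨fun i => ?_, fun i j hji => ?_⟩
  · rcases eq_or_ne i i₀ with rfl | hi
    · simpa using hadj
    · simpa [hi] using h.1 i
  · rcases eq_or_ne i i₀ with rfl | hi
    · simpa using hx j hji
    · simpa [hi] using h.2 i j hji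

theorem snoc (h : IsZWitness G v w) {x y : V} (hyx : G.Adj y x)
    (hx : ∀ j, x ≠ v j ∧ ¬ G.Adj (v j) x) :
    IsZWitness G (Fin.snoc v y : Fin (k + 1) → V) (Fin.snoc w x) := by
  refine ⟨fun i => ?_, fun i j hji => ?_⟩
  · induction i using Fin.lastCases with
    | last => simpa using hyx
    | cast i => simpa using h.1 i
  · induction j using Fin.lastCases with
    | last => exact absurd hji (Fin.le_last i).not_gt
    | cast j =>
      induction i using Fin.lastCases with
      | last => simpa using hx j
      | cast i => simpa using h.2 i j (Fin.castSucc_lt_castSucc_iff.mp hji)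

end IsZWitness

theorem IsZSeq.exists_isZWitness {l : List V} (hl : IsZSeq G l) :
    ∃ w, IsZWitness G l.get w := by
  choose w hadj hw using hl.2
  exact ⟨w, hadj, fun i j hji => hw i j hji⟩

theorem exists_isZGrundySeq [Fintype V] : ∃ l : List V, IsZGrundySeq G l := by
  set S : Set ℕ := {n | ∃ l : List V, IsZSeq G l ∧ l.length = n}
  have hS : BddAbove S := ⟨Fintype.card V, by
    rintro _ ⟨l, hl, rfl⟩
    exact hl.1.length_le_card⟩
  obtain ⟨l, hl, hlen⟩ : sSup S ∈ S :=
    Nat.sSup_mem ⟨0, [], ⟨List.nodup_nil, fun i => i.elim0⟩, rfl⟩ hS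
  exact ⟨l, hl, fun l' hl' => hlen ▸ le_csSup hS ⟨l', hl', rfl⟩⟩

end

theorem exists_ZGrundySeq_containing_general {V : Type*} [Fintype V] (G : SimpleGraph V)
    (x : V) (hx : ∃ y : V, G.Adj x y) :
    ∃ l : List V, IsZGrundySeq G l ∧ x ∈ l := by
  obtain ⟨l, hl⟩ := exists_isZGrundySeq G
  obtain ⟨w, hw⟩ := hl.1.exists_isZWitness
  by_cases hxl : x ∈ l
  · exact ⟨l, hl, hxl⟩
  have hx_ne : ∀ j, x ≠ l.get j := fun j h => hxl (h ▸ l.get_mem j)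
  by_cases hnbr : ∃ i, G.Adj (l.get i) x
  · obtain ⟨i₀, hi₀, hmin⟩ := wellFounded_lt.has_min {i | G.Adj (l.get i) x} hnbr
    have hw' := (hw.update hi₀ fun j hj => ⟨hx_ne j, fun h => hmin j h hj⟩).rev
    refine ⟨_, ⟨hw'.isZSeq, fun l' hl' => by simpa using hl.2 l' hl'⟩, ?_⟩
    exact List.mem_ofFn.mpr ⟨i₀.rev, by simp⟩
  · obtain ⟨y, hxy⟩ := hx
    push Not at hnbr
    have hlen := hl.2 _ (hw.snoc hxy.symm fun j => ⟨hx_ne j, hnbr j⟩).isZSeq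
    simp at hlen

/-- If `G` is a finite graph with at least one edge and `x` is a non-isolated vertex,
then some Z-Grundy dominating sequence contains `x`. -/
theorem exists_ZGrundySeq_containing {V : Type*} [Fintype V] (G : SimpleGraph V)
    (hG : G.edgeSet.Nonempty) (x : V) (hx : ∃ y : V, G.Adj x y) :
    ∃ l : List V, IsZGrundySeq G l ∧ x ∈ l :=
  exists_ZGrundySeq_containing_general G x hx
end

section
/- A finite simple graph G has exactly one minimum zero forcing set if and only if G has no edges. -/
/-- The set of vertices that eventually become active in the zero forcing process
started from the set `S`: an active vertex whose neighbors, except exactly one,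
are all active, forces the remaining one to become active. -/
inductive ZFClosed {V : Type*} (G : SimpleGraph V) (S : Set V) : V → Prop
  | init (v : V) (hv : v ∈ S) : ZFClosed G S v
  | force (u v : V) (hu : ZFClosed G S u) (huv : G.Adj u v)
      (hrest : ∀ w : V, G.Adj u w → w ≠ v → ZFClosed G S w) : ZFClosed G S v

/-- `S` is a zero forcing set of `G` if the zero forcing process started at `S`
activates all vertices. -/
def IsZeroForcingSet {V : Type*} (G : SimpleGraph V) (S : Set V) : Prop :=
  ∀ v : V, ZFClosed G S v

/-- A minimum zero forcing set: a zero forcing set of minimum cardinality. -/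
def IsMinZeroForcingSet {V : Type*} (G : SimpleGraph V) (S : Set V) : Prop :=
  IsZeroForcingSet G S ∧ ∀ S' : Set V, IsZeroForcingSet G S' → S.ncard ≤ S'.ncard

/-!
If `G` has an edge `ab`, then `V ∖ {b}` is a zero forcing set, so a minimum zero forcing set `S`
is proper, and some chronological list of forces `u₁ → v₁, …, uₖ → vₖ` turns `S` into `V`.
Played backwards, `vₖ → uₖ, …, v₁ → u₁` is again a valid chronology, started from the vertices
that never force: when `uᵢ` forced `vᵢ`, no earlier forcer was adjacent to `vᵢ`. That start set
has `|V| - k = |S|` elements but misses `u₁ ∈ S`. Without edges, nothing is ever forced, so `V`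
is the only zero forcing set.
-/

section

open Set

variable {V : Type*} {G : SimpleGraph V}

structure Forces (G : SimpleGraph V) (A : Set V) (u v : V) : Prop where
  fst_mem : u ∈ A
  snd_notMem : v ∉ A
  adj : G.Adj u v
  mem_of_adj : ∀ w, G.Adj u w → w ≠ v → w ∈ A

/-- `ForcingChain G A L B`: performing the forces `(u, v)` of `L` in order takes the active set
`A` to `B`. -/
inductive ForcingChain (G : SimpleGraph V) : Set V → List (V × V) → Set V → Prop
  | nil (A : Set V) : ForcingChain G A [] A
  | cons {A B : Set V} {u v : V} {L : List (V × V)} :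
      Forces G A u v → ForcingChain G (insert v A) L B → ForcingChain G A ((u, v) :: L) B

theorem ZFClosed.trans {A B : Set V} (hB : ∀ y ∈ B, ZFClosed G A y) {x : V}
    (hx : ZFClosed G B x) : ZFClosed G A x := by
  induction hx with
  | init v hv => exact hB v hv
  | force u v _ huv _ ihu ihrest => exact .force u v ihu huv ihrest

theorem ZFClosed.mem_of_forall_not_forces {A : Set V} (hA : ∀ u v, ¬ Forces G A u v) {x : V}
    (hx : ZFClosed G A x) : x ∈ A := by
  induction hx with
  | init v hv => exact hv
  | force u v _ huv _ ihu ihrest =>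
    by_contra hv
    exact hA u v ⟨ihu, hv, huv, ihrest⟩

theorem Forces.zfClosed {A : Set V} {u v : V} (h : Forces G A u v) : ZFClosed G A v :=
  .force u v (.init u h.fst_mem) h.adj fun w hw hwv => .init w (h.mem_of_adj w hw hwv)

theorem IsZeroForcingSet.mono {A B : Set V} (hA : IsZeroForcingSet G A) (hAB : A ⊆ B) :
    IsZeroForcingSet G B :=
  fun x => (hA x).trans fun y hy => .init y (hAB hy)

theorem IsZeroForcingSet.exists_forces {A : Set V} (hA : IsZeroForcingSet G A)
    (hne : A ≠ univ) : ∃ u v, Forces G A u v := by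
  by_contra! h
  exact hne (eq_univ_of_forall fun x => (hA x).mem_of_forall_not_forces h)

theorem isZeroForcingSet_univ : IsZeroForcingSet G univ :=
  fun x => .init x (mem_univ x)

theorem isZeroForcingSet_compl_singleton {a b : V} (hab : G.Adj a b) :
    IsZeroForcingSet G {b}ᶜ := by
  intro x
  by_cases hx : x = b
  · subst hx
    exact Forces.zfClosed ⟨hab.ne, not_not.mpr rfl, hab, fun w _ hw => hw⟩
  · exact .init x hx

theorem isZeroForcingSet_bot_iff {S : Set V} :
    IsZeroForcingSet (⊥ : SimpleGraph V) S ↔ S = univ := by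
  refine ⟨fun hS => ?_, fun hS => hS ▸ isZeroForcingSet_univ⟩
  exact eq_univ_of_forall fun x => (hS x).mem_of_forall_not_forces fun u v h => h.adj

theorem isMinZeroForcingSet_bot_iff {S : Set V} :
    IsMinZeroForcingSet (⊥ : SimpleGraph V) S ↔ S = univ := by
  simp only [IsMinZeroForcingSet, isZeroForcingSet_bot_iff, forall_eq, and_iff_left_iff_imp]
  rintro rfl
  rfl

namespace ForcingChain

theorem subset {A B : Set V} {L : List (V × V)} (h : ForcingChain G A L B) : A ⊆ B := by
  induction h with
  | nil => rfl
  | cons _ _ ih => exact (subset_insert _ _).trans ih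

theorem zfClosed {A B : Set V} {L : List (V × V)} (h : ForcingChain G A L B) {x : V}
    (hx : x ∈ B) : ZFClosed G A x := by
  induction h generalizing x with
  | nil => exact .init x hx
  | cons hf _ ih =>
    refine (ih hx).trans fun y hy => ?_
    rcases hy with rfl | hy
    exacts [hf.zfClosed, .init y hy]

theorem mem_of_mem_map_fst {A B : Set V} {L : List (V × V)} (h : ForcingChain G A L B) {u : V}
    (hu : u ∈ L.map Prod.fst) : u ∈ B := by
  induction h with
  | nil => simp at hu
  | cons hf hL ih =>
    rcases List.mem_cons.mp hu with rfl | hu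
    exacts [hL.subset (subset_insert _ _ hf.fst_mem), ih hu]

theorem mem_of_adj_mem_map_fst {A B : Set V} {L : List (V × V)} (h : ForcingChain G A L B)
    {u w : V} (hu : u ∈ L.map Prod.fst) (huw : G.Adj u w) : w ∈ B := by
  induction h with
  | nil => simp at hu
  | @cons A _ _ v _ hf hL ih =>
    rcases List.mem_cons.mp hu with rfl | hu
    · apply hL.subset
      by_cases hwv : w = v
      exacts [hwv ▸ mem_insert _ _, subset_insert _ _ (hf.mem_of_adj w huw hwv)]
    · exact ih hu

theorem of_append {A C : Set V} {L₁ L₂ : List (V × V)} (h : ForcingChain G A (L₁ ++ L₂) C) :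
    ∃ B, ForcingChain G A L₁ B ∧ ForcingChain G B L₂ C := by
  induction L₁ generalizing A with
  | nil => exact ⟨A, nil A, h⟩
  | cons p L₁ ih =>
    cases h with
    | cons hf hL =>
      obtain ⟨B, h₁, h₂⟩ := ih hL
      exact ⟨B, cons hf h₁, h₂⟩

theorem ncard_add_length [Finite V] {A B : Set V} {L : List (V × V)}
    (h : ForcingChain G A L B) : A.ncard + L.length = B.ncard := by
  induction h with
  | nil => rfl
  | cons hf _ ih =>
    rw [← ih, ncard_insert_of_notMem hf.snd_notMem, List.length_cons]
    omega

theorem reverse {A B : Set V} {L : List (V × V)} (h : ForcingChain G A L B) :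
    ForcingChain G {x | x ∉ L.map Prod.fst} (L.reverse.map Prod.swap) univ := by
  induction L using List.reverseRecOn generalizing A B with
  | nil => simpa using nil univ
  | append_singleton L p ih =>
    obtain ⟨u, v⟩ := p
    obtain ⟨C, hL, hp⟩ := h.of_append
    obtain _ | ⟨hf, -⟩ := hp
    have hv : v ∉ L.map Prod.fst := fun hv => hf.snd_notMem (hL.mem_of_mem_map_fst hv)
    have hu : u ∉ L.map Prod.fst := fun hu =>
      hf.snd_notMem (hL.mem_of_adj_mem_map_fst hu hf.adj)
    have hw : ∀ w, G.Adj v w → w ∉ L.map Prod.fst := fun w hvw hw =>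
      hf.snd_notMem (hL.mem_of_adj_mem_map_fst hw hvw.symm)
    have hstart : insert u {x | x ∉ L.map Prod.fst ++ [u]} = {x | x ∉ L.map Prod.fst} := by
      ext x
      simp only [mem_insert_iff, mem_ofPred_eq, List.mem_append, List.mem_singleton]
      rcases eq_or_ne x u with rfl | hx <;> tauto
    have hrev := ih hL
    rw [← hstart] at hrev
    simp only [List.reverse_append, List.map_append, List.reverse_singleton, List.map_singleton,
      List.singleton_append]
    refine cons ⟨?_, by simp, hf.adj.symm, fun w hvw hwu => ?_⟩ hrev
    · simpa [hf.adj.ne'] using hv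
    · simpa [hwu] using hw w hvw

end ForcingChain

theorem IsZeroForcingSet.exists_forcingChain [Finite V] {A : Set V} (hA : IsZeroForcingSet G A) :
    ∃ L, ForcingChain G A L univ := by
  induction hn : Aᶜ.ncard generalizing A with
  | zero =>
    rw [ncard_eq_zero, compl_empty_iff] at hn
    subst hn
    exact ⟨[], .nil univ⟩
  | succ n ih =>
    have hne : A ≠ univ := by rintro rfl; simp at hn
    obtain ⟨u, v, hf⟩ := hA.exists_forces hne
    have hcard : (insert v A)ᶜ.ncard = n := by
      have hA := ncard_compl A
      have hvA := ncard_compl (insert v A)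
      rw [ncard_insert_of_notMem hf.snd_notMem] at hvA
      omega
    obtain ⟨L, hL⟩ := ih (hA.mono (subset_insert v A)) hcard
    exact ⟨(u, v) :: L, .cons hf hL⟩

theorem IsMinZeroForcingSet.ne_univ_of_adj [Finite V] {S : Set V} (hS : IsMinZeroForcingSet G S)
    {a b : V} (hab : G.Adj a b) : S ≠ univ := by
  rintro rfl
  have hlt : ({b}ᶜ : Set V).ncard < (univ : Set V).ncard :=
    ncard_lt_ncard (ssubset_univ_iff.mpr (compl_ne_univ.mpr (singleton_nonempty b)))
  exact (hS.2 _ (isZeroForcingSet_compl_singleton hab)).not_gt hlt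

theorem IsMinZeroForcingSet.exists_ne [Finite V] {S : Set V} (hS : IsMinZeroForcingSet G S)
    (hne : S ≠ univ) : ∃ T, IsMinZeroForcingSet G T ∧ T ≠ S := by
  obtain ⟨L, hL⟩ := hS.1.exists_forcingChain
  obtain ⟨u, huS, huL⟩ : ∃ u ∈ S, u ∈ L.map Prod.fst := by
    cases hL with
    | nil => exact absurd rfl hne
    | cons hf _ => exact ⟨_, hf.fst_mem, List.mem_cons_self⟩
  have hT := hL.reverse
  have hcard : {x | x ∉ L.map Prod.fst}.ncard = S.ncard := by
    have h₁ := hL.ncard_add_length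
    have h₂ := hT.ncard_add_length
    simp only [List.length_map, List.length_reverse] at h₂
    omega
  refine ⟨_, ⟨fun x => hT.zfClosed (mem_univ x), fun S' hS' => hcard ▸ hS.2 S' hS'⟩, ?_⟩
  rintro rfl
  exact huS huL

end

/-- A finite graph has exactly one minimum zero forcing set iff it has no edges. -/
theorem unique_min_zero_forcing_iff_no_edges {V : Type*} [Fintype V] (G : SimpleGraph V) :
    (∃! S : Set V, IsMinZeroForcingSet G S) ↔ G.edgeSet = ∅ := by
  rw [SimpleGraph.edgeSet_eq_empty]
  constructor
  · rintro ⟨S, hS, huniq⟩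
    by_contra hG
    obtain ⟨a, b, hab⟩ := SimpleGraph.ne_bot_iff_exists_adj.mp hG
    obtain ⟨T, hT, hTS⟩ := hS.exists_ne (hS.ne_univ_of_adj hab)
    exact hTS (huniq T hT)
  · rintro rfl
    simp [isMinZeroForcingSet_bot_iff]
end

section
/- If 𝒫 is a minimum path cover of a finite tree T and e = xy is a connector edge of 𝒫, then at least one of the endpoints x, y of e is an interior connector vertex of 𝒫. -/
/-- A nonempty list of distinct vertices forming an induced path of `G`:
consecutive vertices are adjacent and non-consecutive vertices are non-adjacent. -/
def IsInducedPath {V : Type*} (G : SimpleGraph V) (l : List V) : Prop :=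
  l ≠ [] ∧ l.Nodup ∧
  (∀ i j : Fin l.length, (i : ℕ) + 1 = (j : ℕ) → G.Adj (l.get i) (l.get j)) ∧
  (∀ i j : Fin l.length, (i : ℕ) + 1 < (j : ℕ) → ¬ G.Adj (l.get i) (l.get j))

/-- A path cover of `G`: a set of pairwise vertex-disjoint induced paths covering all
vertices of `G`. -/
def IsPathCover {V : Type*} [DecidableEq V] (G : SimpleGraph V) (P : Finset (List V)) : Prop :=
  (∀ l ∈ P, IsInducedPath G l) ∧
  (∀ v : V, ∃ l ∈ P, v ∈ l) ∧
  (∀ l ∈ P, ∀ l' ∈ P, l ≠ l' → ∀ v : V, v ∈ l → v ∉ l')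

/-- A minimum path cover: a path cover with the fewest possible number of paths. -/
def IsMinPathCover {V : Type*} [DecidableEq V] (G : SimpleGraph V)
    (P : Finset (List V)) : Prop :=
  IsPathCover G P ∧ ∀ Q : Finset (List V), IsPathCover G Q → P.card ≤ Q.card

/-- `x` is an interior vertex of some path of the cover `P`, i.e. it belongs to a path
of `P` and is not an end-vertex of that path. -/
def InteriorIn {V : Type*} (P : Finset (List V)) (x : V) : Prop :=
  ∃ l ∈ P, ∃ h : l ≠ [], x ∈ l ∧ x ≠ l.head h ∧ x ≠ l.getLast h



/-!
If neither end of the connector edge `xy` were interior, then `x` and `y` would be end-vertices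
of their paths, which can be oriented so that the first ends at `x` and the second starts at `y`.
Their concatenation is a path of `T`, and in a tree every path is induced: a chord would be a
bridge whose ends are still joined by the rest of the path. Replacing the two paths by their
concatenation gives a path cover with fewer paths.
-/

open SimpleGraph

section

variable {V : Type*} {G : SimpleGraph V}

lemma List.IsChain.reachable {l : List V} (hl : l.IsChain G.Adj) {u v : V} (hu : u ∈ l)
    (hv : v ∈ l) : G.Reachable u v := by
  classical
  let p := Walk.ofSupport l (List.ne_nil_of_mem hu) hl
  have hsupp : p.support = l := Walk.support_ofSupport _ _
  exact (p.takeUntil u (hsupp.symm ▸ hu)).reachable.symm.trans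
    (p.takeUntil v (hsupp.symm ▸ hv)).reachable

namespace IsInducedPath

variable {l : List V}

lemma isChain (h : IsInducedPath G l) : l.IsChain G.Adj :=
  List.isChain_iff_getElem.mpr fun k hk => h.2.2.1 ⟨k, by omega⟩ ⟨k + 1, hk⟩ rfl

lemma reverse (h : IsInducedPath G l) : IsInducedPath G l.reverse := by
  obtain ⟨hne, hnd, hadj, hnadj⟩ := h
  refine ⟨by simpa using hne, List.nodup_reverse.mpr hnd, fun ⟨i, hi⟩ ⟨j, hj⟩ hij => ?_,
    fun ⟨i, hi⟩ ⟨j, hj⟩ hij => ?_⟩ <;> simp only [List.length_reverse] at hi hj hij ⊢ <;>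
    simp only [List.get_eq_getElem, List.getElem_reverse]
  · exact (hadj ⟨_, by omega⟩ ⟨_, by omega⟩ (by simp only; omega)).symm
  · exact fun h => hnadj ⟨_, by omega⟩ ⟨_, by omega⟩ (by simp only; omega) h.symm

lemma exists_mem_getLast? (h : IsInducedPath G l) {x : V} (hx : x ∈ l.head? ∨ x ∈ l.getLast?) :
    ∃ l', IsInducedPath G l' ∧ (∀ v, v ∈ l' ↔ v ∈ l) ∧ x ∈ l'.getLast? := by
  rcases hx with hx | hx
  · exact ⟨l.reverse, h.reverse, by simp, by rwa [List.getLast?_reverse]⟩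
  · exact ⟨l, h, by simp, hx⟩

lemma exists_mem_head? (h : IsInducedPath G l) {x : V} (hx : x ∈ l.head? ∨ x ∈ l.getLast?) :
    ∃ l', IsInducedPath G l' ∧ (∀ v, v ∈ l' ↔ v ∈ l) ∧ x ∈ l'.head? := by
  rcases hx with hx | hx
  · exact ⟨l, h, by simp, hx⟩
  · exact ⟨l.reverse, h.reverse, by simp, by rwa [List.head?_reverse]⟩

end IsInducedPath

lemma SimpleGraph.IsAcyclic.isInducedPath (hG : G.IsAcyclic) {l : List V} (hne : l ≠ [])
    (hnd : l.Nodup) (hch : l.IsChain G.Adj) : IsInducedPath G l := by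
  refine ⟨hne, hnd, fun ⟨i, hi⟩ ⟨j, hj⟩ hij => ?_, fun i j hij hadj => ?_⟩
  · subst hij
    exact List.isChain_iff_getElem.mp hch i hj
  · refine isAcyclic_iff_forall_adj_isBridge.mp hG hadj ?_
    refine List.IsChain.reachable ?_ (l.get_mem i) (l.get_mem j)
    refine List.isChain_iff_getElem.mpr fun k hk => ?_
    rw [deleteEdges_adj, Set.mem_singleton_iff, Sym2.eq_iff]
    refine ⟨List.isChain_iff_getElem.mp hch k hk, ?_⟩
    simp only [List.get_eq_getElem, hnd.getElem_inj_iff]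
    omega

lemma SimpleGraph.IsAcyclic.isInducedPath_append (hG : G.IsAcyclic) {l₁ l₂ : List V}
    (h₁ : IsInducedPath G l₁) (h₂ : IsInducedPath G l₂) (hdisj : ∀ v ∈ l₁, v ∉ l₂)
    (hadj : ∀ x ∈ l₁.getLast?, ∀ y ∈ l₂.head?, G.Adj x y) : IsInducedPath G (l₁ ++ l₂) :=
  hG.isInducedPath (by simp [h₁.1]) (List.nodup_append.mpr ⟨h₁.2.1, h₂.2.1,
    fun a ha b hb hab => hdisj a ha (hab ▸ hb)⟩) (h₁.isChain.append h₂.isChain hadj)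

variable [DecidableEq V] {P : Finset (List V)} {l₁ l₂ m : List V}

lemma IsPathCover.insert_erase_erase (hP : IsPathCover G P) (h₁ : l₁ ∈ P) (h₂ : l₂ ∈ P)
    (hm : IsInducedPath G m) (hmem : ∀ v, v ∈ m ↔ v ∈ l₁ ∨ v ∈ l₂) :
    IsPathCover G (insert m ((P.erase l₁).erase l₂)) := by
  obtain ⟨hind, hcov, hdisj⟩ := hP
  have hm_disj : ∀ l ∈ P, l ≠ l₁ → l ≠ l₂ → ∀ v ∈ m, v ∉ l := fun l hl hl₁ hl₂ v hv => by
    rcases (hmem v).mp hv with hv | hv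
    exacts [hdisj _ h₁ l hl (Ne.symm hl₁) v hv, hdisj _ h₂ l hl (Ne.symm hl₂) v hv]
  simp only [IsPathCover, Finset.mem_insert, Finset.mem_erase]
  refine ⟨?_, fun v => ?_, ?_⟩
  · rintro l (rfl | ⟨-, -, hl⟩)
    exacts [hm, hind l hl]
  · obtain ⟨l, hl, hvl⟩ := hcov v
    by_cases h : l = l₁ ∨ l = l₂
    · exact ⟨m, Or.inl rfl, (hmem v).mpr (by rcases h with rfl | rfl <;> simp [hvl])⟩
    · push Not at h
      exact ⟨l, Or.inr ⟨h.2, h.1, hl⟩, hvl⟩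
  · rintro l (rfl | ⟨hl₂, hl₁, hl⟩) l' (rfl | ⟨hl₂', hl₁', hl'⟩) hne v hv
    · exact absurd rfl hne
    · exact hm_disj l' hl' hl₁' hl₂' v hv
    · exact fun hv' => hm_disj l hl hl₁ hl₂ v hv' hv
    · exact hdisj l hl l' hl' hne v hv

lemma IsMinPathCover.not_isInducedPath_of_mem_iff (hP : IsMinPathCover G P) (h₁ : l₁ ∈ P)
    (h₂ : l₂ ∈ P) (hne : l₁ ≠ l₂) (hmem : ∀ v, v ∈ m ↔ v ∈ l₁ ∨ v ∈ l₂) :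
    ¬ IsInducedPath G m := fun hm => by
  have hmin := hP.2 _ (hP.1.insert_erase_erase h₁ h₂ hm hmem)
  have hinsert := Finset.card_insert_le m ((P.erase l₁).erase l₂)
  rw [Finset.card_erase_of_mem (Finset.mem_erase.mpr ⟨hne.symm, h₂⟩),
    Finset.card_erase_of_mem h₁] at hinsert
  have : 2 ≤ P.card := Finset.one_lt_card.mpr ⟨l₁, h₁, l₂, h₂, hne⟩
  omega

lemma mem_head?_or_mem_getLast?_of_not_interiorIn {x : V} (hx : ¬ InteriorIn P x)
    {l : List V} (hl : l ∈ P) (hxl : x ∈ l) : x ∈ l.head? ∨ x ∈ l.getLast? := by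
  have hne := List.ne_nil_of_mem hxl
  rw [List.head?_eq_some_head hne, List.getLast?_eq_some_getLast hne, Option.mem_some_iff,
    Option.mem_some_iff]
  by_contra! h
  exact hx ⟨l, hl, hne, hxl, Ne.symm h.1, Ne.symm h.2⟩

end

theorem connector_edge_has_interior_endpoint_general {V : Type*} [DecidableEq V]
    (T : SimpleGraph V) (hT : T.IsTree)
    (P : Finset (List V)) (hP : IsMinPathCover T P)
    (x y : V) (hxy : T.Adj x y)
    (lx ly : List V) (hlx : lx ∈ P) (hly : ly ∈ P)
    (hx : x ∈ lx) (hy : y ∈ ly) (hne : lx ≠ ly) :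
    InteriorIn P x ∨ InteriorIn P y := by
  by_contra! ⟨hxI, hyI⟩
  obtain ⟨lx', hindx, hmemx, hx'⟩ := (hP.1.1 lx hlx).exists_mem_getLast?
    (mem_head?_or_mem_getLast?_of_not_interiorIn hxI hlx hx)
  obtain ⟨ly', hindy, hmemy, hy'⟩ := (hP.1.1 ly hly).exists_mem_head?
    (mem_head?_or_mem_getLast?_of_not_interiorIn hyI hly hy)
  refine hP.not_isInducedPath_of_mem_iff hlx hly hne (m := lx' ++ ly') (by simp [hmemx, hmemy]) ?_
  refine hT.isAcyclic.isInducedPath_append hindx hindy (fun v hv hv' => ?_) (fun a ha b hb => ?_)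
  · exact hP.1.2.2 lx hlx ly hly hne v ((hmemx v).mp hv) ((hmemy v).mp hv')
  · rwa [Option.mem_unique ha hx', Option.mem_unique hb hy']

/-- If `P` is a minimum path cover of a finite tree `T` and `xy` is a connector edge of
`P`, then at least one of `x`, `y` is an interior connector vertex of `P`. -/
theorem connector_edge_has_interior_endpoint {V : Type*} [Fintype V] [DecidableEq V]
    (T : SimpleGraph V) (hT : T.IsTree)
    (P : Finset (List V)) (hP : IsMinPathCover T P)
    (x y : V) (hxy : T.Adj x y)
    (lx ly : List V) (hlx : lx ∈ P) (hly : ly ∈ P)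
    (hx : x ∈ lx) (hy : y ∈ ly) (hne : lx ≠ ly) :
    InteriorIn P x ∨ InteriorIn P y :=
  connector_edge_has_interior_endpoint_general T hT P hP x y hxy lx ly hlx hly hx hy hne
end

section
/- If G is a finite simple graph and x is an arbitrary vertex of G, then there exists a Grundy dominating sequence of G (that is, a closed neighborhood sequence of maximum length) whose set of vertices contains x. -/
/-- A closed neighborhood sequence in `G`: a list of distinct vertices such that each
vertex footprints some vertex of its closed neighborhood not contained in the closed
neighborhood of any earlier vertex. -/
def IsClosedNbrSeq {V : Type*} (G : SimpleGraph V) (l : List V) : Prop :=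
  l.Nodup ∧ ∀ i : Fin l.length, ∃ w : V, (w = l.get i ∨ G.Adj (l.get i) w) ∧
    ∀ j : Fin l.length, (j : ℕ) < (i : ℕ) → w ≠ l.get j ∧ ¬ G.Adj (l.get j) w

/-- A Grundy dominating sequence: a closed neighborhood sequence of maximum length. -/
def IsGrundyDomSeq {V : Type*} (G : SimpleGraph V) (l : List V) : Prop :=
  IsClosedNbrSeq G l ∧ ∀ l' : List V, IsClosedNbrSeq G l' → l'.length ≤ l.length

/-!
Let `l` be a Grundy dominating sequence. By maximality `l ++ [x]` is not a closed
neighborhood sequence, so `N[x]` is covered by the closed neighborhoods of the entries of `l`.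
Write `l = a ++ y :: b` with `y` the entry at which `N[x]` first becomes covered. Then
`a ++ x :: b` is again a closed neighborhood sequence: `x` footprints a vertex outside the
neighborhoods of `a`, and since `N[x]` lies in the neighborhoods of `a ++ [y]`, every footprint of
an entry of `b` still avoids the neighborhoods of `a ++ [x]`.
-/

def closedNbhd {V : Type*} (G : SimpleGraph V) (v : V) : Set V := {w | w = v ∨ G.Adj v w}

def closedNbhdOfList {V : Type*} (G : SimpleGraph V) (l : List V) : Set V :=
  {w | ∃ u ∈ l, w ∈ closedNbhd G u}

theorem List.exists_shortest_prefix {α : Type*} (P : List α → Prop) {l : List α} (hnil : ¬ P [])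
    (hl : P l) : ∃ a y b, l = a ++ y :: b ∧ ¬ P a ∧ P (a ++ [y]) := by
  induction l using List.reverseRecOn with
  | nil => exact absurd hl hnil
  | append_singleton l y ih =>
    by_cases hP : P l
    · obtain ⟨a, z, b, rfl, ha, haz⟩ := ih hP
      exact ⟨a, z, b ++ [y], by simp, ha, haz⟩
    · exact ⟨l, y, [], rfl, hP, hl⟩

section

variable {V : Type*} (G : SimpleGraph V)

theorem self_mem_closedNbhd (v : V) : v ∈ closedNbhd G v := Or.inl rfl

theorem closedNbhd_subset_closedNbhdOfList {u : V} {l : List V} (hu : u ∈ l) :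
    closedNbhd G u ⊆ closedNbhdOfList G l :=
  fun _ hw => ⟨u, hu, hw⟩

@[simp]
theorem closedNbhdOfList_nil : closedNbhdOfList G [] = ∅ := by
  simp [closedNbhdOfList]

theorem closedNbhdOfList_append (a b : List V) :
    closedNbhdOfList G (a ++ b) = closedNbhdOfList G a ∪ closedNbhdOfList G b := by
  ext w
  simp only [closedNbhdOfList, List.mem_append, or_and_right, exists_or, Set.mem_ofPred_eq,
    Set.mem_union]

theorem closedNbhdOfList_append_singleton (l : List V) (v : V) :
    closedNbhdOfList G (l ++ [v]) = closedNbhdOfList G l ∪ closedNbhd G v := by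
  rw [closedNbhdOfList_append]
  congr 1
  ext w
  simp [closedNbhdOfList]

variable {G}

/-- Distinctness of the entries is implied by the footprint condition. -/
theorem isClosedNbrSeq_iff_forall_not_subset {l : List V} :
    IsClosedNbrSeq G l ↔
      ∀ i (hi : i < l.length), ¬ closedNbhd G l[i] ⊆ closedNbhdOfList G (l.take i) := by
  constructor
  · rintro ⟨-, hfoot⟩ i hi hsub
    obtain ⟨w, hw, hnew⟩ := hfoot ⟨i, hi⟩
    obtain ⟨u, hu, hwu⟩ := hsub hw
    obtain ⟨j, hj, rfl⟩ := List.mem_take_iff_getElem.1 hu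
    have hji := hnew ⟨j, by omega⟩ (by simp only; omega)
    exact hwu.elim hji.1 hji.2
  · intro h
    refine ⟨List.pairwise_iff_getElem.2 fun j i hj hi hji heq => h i hi ?_, fun i => ?_⟩
    · exact heq ▸ closedNbhd_subset_closedNbhdOfList G
        (List.mem_take_iff_getElem.2 ⟨j, by omega, rfl⟩)
    · obtain ⟨w, hw, hnew⟩ := Set.not_subset.1 (h i i.2)
      refine ⟨w, hw, fun j hji => not_or.1 fun hwj => hnew ?_⟩
      exact ⟨_, List.mem_take_iff_getElem.2 ⟨j, by omega, rfl⟩, hwj⟩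

theorem isClosedNbrSeq_nil : IsClosedNbrSeq G [] :=
  isClosedNbrSeq_iff_forall_not_subset.2 fun _ hi => absurd hi (Nat.not_lt_zero _)

theorem IsClosedNbrSeq.of_append {a b : List V} (h : IsClosedNbrSeq G (a ++ b)) :
    IsClosedNbrSeq G a := by
  rw [isClosedNbrSeq_iff_forall_not_subset] at h ⊢
  intro i hi
  have hi' : i < (a ++ b).length := by simp only [List.length_append]; omega
  rw [← List.getElem_append_left hi, ← List.take_append_of_le_length hi.le]
  exact h i hi'

theorem isClosedNbrSeq_append_singleton_iff {l : List V} {v : V} :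
    IsClosedNbrSeq G (l ++ [v]) ↔
      IsClosedNbrSeq G l ∧ ¬ closedNbhd G v ⊆ closedNbhdOfList G l := by
  refine ⟨fun h => ⟨h.of_append, ?_⟩, fun ⟨hl, hv⟩ => ?_⟩
  · have := isClosedNbrSeq_iff_forall_not_subset.1 h l.length (by simp)
    rwa [List.getElem_concat_length rfl, List.take_left' rfl] at this
  · rw [isClosedNbrSeq_iff_forall_not_subset] at hl ⊢
    intro i hi
    rcases Nat.lt_succ_iff_lt_or_eq.1 (by simpa using hi) with hi | rfl
    · rw [List.getElem_append_left hi, List.take_append_of_le_length hi.le]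
      exact hl i hi
    · rwa [List.getElem_concat_length rfl, List.take_left' rfl]

theorem IsClosedNbrSeq.append_of_closedNbhdOfList_subset {a a' b : List V}
    (h : IsClosedNbrSeq G (a ++ b)) (ha' : IsClosedNbrSeq G a')
    (hsub : closedNbhdOfList G a' ⊆ closedNbhdOfList G a) : IsClosedNbrSeq G (a' ++ b) := by
  induction b using List.reverseRecOn with
  | nil => simpa using ha'
  | append_singleton b v ih =>
    rw [← List.append_assoc, isClosedNbrSeq_append_singleton_iff] at h ⊢
    refine ⟨ih h.1, fun hv => h.2 (hv.trans ?_)⟩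
    rw [closedNbhdOfList_append, closedNbhdOfList_append]
    exact Set.union_subset_union_left _ hsub

variable (G) in
theorem exists_isGrundyDomSeq [Finite V] : ∃ l, IsGrundyDomSeq G l := by
  have := Fintype.ofFinite V
  set S := {n | ∃ l, IsClosedNbrSeq G l ∧ l.length = n}
  have hbdd : BddAbove S :=
    ⟨Fintype.card V, by rintro _ ⟨l, hl, rfl⟩; exact hl.1.length_le_card⟩
  obtain ⟨l, hl, hlen⟩ := Nat.sSup_mem (s := S) ⟨0, [], isClosedNbrSeq_nil, rfl⟩ hbdd
  exact ⟨l, hl, fun l' hl' => hlen ▸ le_csSup hbdd ⟨l', hl', rfl⟩⟩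

end

/-- For every vertex `x` of a finite graph `G` there exists a Grundy dominating sequence
of `G` containing `x`. -/
theorem exists_grundyDomSeq_containing {V : Type*} [Fintype V] (G : SimpleGraph V) (x : V) :
    ∃ l : List V, IsGrundyDomSeq G l ∧ x ∈ l := by
  obtain ⟨l, hl, hmax⟩ := exists_isGrundyDomSeq G
  have hcov : closedNbhd G x ⊆ closedNbhdOfList G l := by
    by_contra hnew
    have := hmax _ (isClosedNbrSeq_append_singleton_iff.2 ⟨hl, hnew⟩)
    simp at this
  obtain ⟨a, y, b, rfl, hxa, hxay⟩ := List.exists_shortest_prefix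
    (fun a => closedNbhd G x ⊆ closedNbhdOfList G a)
    (fun h => by simpa using h (self_mem_closedNbhd G x)) hcov
  have hax : IsClosedNbrSeq G (a ++ [x]) :=
    isClosedNbrSeq_append_singleton_iff.2 ⟨hl.of_append, hxa⟩
  have hsub : closedNbhdOfList G (a ++ [x]) ⊆ closedNbhdOfList G (a ++ [y]) := by
    simp only [closedNbhdOfList_append_singleton] at hxay ⊢
    exact Set.union_subset Set.subset_union_left hxay
  rw [← List.singleton_append, ← List.append_assoc] at hl hmax
  refine ⟨a ++ [x] ++ b, ⟨hl.append_of_closedNbhdOfList_subset hax hsub, fun l' hl' => ?_⟩,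
    by simp⟩
  simpa using hmax l' hl'
end

section
/- If G is a finite simple graph with at least one edge and x is a vertex of G that is not isolated, then there exists a Grundy total dominating sequence of G (that is, an open neighborhood sequence of maximum length) whose set of vertices contains x. -/
/-- An open neighborhood sequence in `G`: a list of distinct vertices such that each
vertex has a neighbor which is not a neighbor of any earlier vertex. -/
def IsOpenNbrSeq {V : Type*} (G : SimpleGraph V) (l : List V) : Prop :=
  l.Nodup ∧ ∀ i : Fin l.length, ∃ w : V, G.Adj (l.get i) w ∧
    ∀ j : Fin l.length, (j : ℕ) < (i : ℕ) → ¬ G.Adj (l.get j) w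

/-- The Grundy total domination number of `G`: the maximum length of an open
neighborhood sequence in `G`. -/
noncomputable def grundyTotalNum {V : Type*} (G : SimpleGraph V) : ℕ :=
  sSup {k : ℕ | ∃ l : List V, IsOpenNbrSeq G l ∧ l.length = k}

/-- A Grundy total dominating sequence: an open neighborhood sequence of maximum
length. -/
def IsGrundyTotalDomSeq {V : Type*} (G : SimpleGraph V) (l : List V) : Prop :=
  IsOpenNbrSeq G l ∧ ∀ l' : List V, IsOpenNbrSeq G l' → l'.length ≤ l.length

/-- A Grundy total dominating set of `G`: the set of vertices of some Grundy total
dominating sequence of `G`. -/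
def IsGrundyTotalDomSet {V : Type*} (G : SimpleGraph V) (A : Set V) : Prop :=
  ∃ l : List V, IsGrundyTotalDomSeq G l ∧ {v : V | v ∈ l} = A

/-- `G` is an iso-unique Grundy total domination graph: any two Grundy total dominating
sets are mapped to each other by some graph automorphism. -/
def IsoUniqueGrundyTotalDom {V : Type*} (G : SimpleGraph V) : Prop :=
  ∀ A B : Set V, IsGrundyTotalDomSet G A → IsGrundyTotalDomSet G B →
    ∃ φ : G ≃g G, ⇑φ '' A = B

/-!
Take a Grundy total dominating sequence `l` not containing `x`. By maximality every
neighbour of `x` is dominated by `l`, since otherwise `l ++ [x]` would be longer. Let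
`l.take (i + 1)` be the shortest prefix of `l` dominating `N(x)`; by minimality some
neighbour `u` of `x` is not dominated by `l.take i`. Replacing `l[i]` by `x`, with private
neighbour `u`, yields an open neighborhood sequence of the same length containing `x`.
-/

section

variable {V : Type*} {G : SimpleGraph V} {l : List V} {x : V}

theorem isOpenNbrSeq_iff_forall_take :
    IsOpenNbrSeq G l ↔ l.Nodup ∧ ∀ i (hi : i < l.length),
      ∃ w, G.Adj l[i] w ∧ ∀ v ∈ l.take i, ¬ G.Adj v w := by
  simp only [IsOpenNbrSeq, Fin.forall_iff, List.get_eq_getElem, List.mem_take_iff_getElem,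
    forall_exists_index]
  refine and_congr_right fun _ => forall₂_congr fun i hi => exists_congr fun w => and_congr_right
    fun _ => ⟨?_, ?_⟩
  · rintro h v j hj rfl
    exact h j (by omega) (by omega)
  · exact fun h j hjl hji => h _ j (by omega) rfl

namespace IsOpenNbrSeq

theorem nil : IsOpenNbrSeq G [] :=
  ⟨List.nodup_nil, fun i => i.elim0⟩

theorem append_singleton (hl : IsOpenNbrSeq G l) {v w : V} (hvl : v ∉ l) (hvw : G.Adj v w)
    (hw : ∀ u ∈ l, ¬ G.Adj u w) : IsOpenNbrSeq G (l ++ [v]) := by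
  rw [isOpenNbrSeq_iff_forall_take] at hl ⊢
  refine ⟨hl.1.append (List.nodup_singleton v) (by simpa using hvl), fun i hi => ?_⟩
  rw [List.length_append, List.length_singleton] at hi
  rcases Nat.lt_succ_iff_lt_or_eq.mp hi with hi | rfl
  · rw [List.getElem_append_left hi, List.take_append_of_le_length hi.le]
    exact hl.2 i hi
  · rw [List.getElem_concat_length rfl, List.take_left' rfl]
    exact ⟨w, hvw, hw⟩

/-- A later vertex `l[a]` keeps its private neighbour `w`: were `w` adjacent to `x`, it would
already be dominated by `l.take (i + 1)`. -/
theorem set (hl : IsOpenNbrSeq G l) {i : ℕ} (hxl : x ∉ l) {u : V} (hxu : G.Adj x u)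
    (hu : ∀ v ∈ l.take i, ¬ G.Adj v u)
    (hdom : ∀ w, G.Adj x w → ∃ v ∈ l.take (i + 1), G.Adj v w) :
    IsOpenNbrSeq G (l.set i x) := by
  rw [isOpenNbrSeq_iff_forall_take] at hl ⊢
  refine ⟨hl.1.set hxl, fun a ha => ?_⟩
  rw [List.length_set] at ha
  rw [List.getElem_set]
  rcases lt_trichotomy a i with hai | rfl | hia
  · rw [if_neg hai.ne', List.take_set_of_le hai.le]
    exact hl.2 a ha
  · rw [if_pos rfl, List.take_set_of_le le_rfl]
    exact ⟨u, hxu, hu⟩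
  · obtain ⟨w, haw, hw⟩ := hl.2 a ha
    refine ⟨w, by rwa [if_neg hia.ne], fun v hv hvw => ?_⟩
    rw [List.take_set] at hv
    rcases List.mem_or_eq_of_mem_set hv with hv | rfl
    · exact hw v hv hvw
    · obtain ⟨v', hv', hv'w⟩ := hdom w hvw
      exact hw v' ((List.take_prefix_take_left (by omega)).subset hv') hv'w

theorem exists_isOpenNbrSeq_set (hl : IsOpenNbrSeq G l) (hxl : x ∉ l) {y : V} (hxy : G.Adj x y)
    (hdom : ∀ w, G.Adj x w → ∃ v ∈ l, G.Adj v w) :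
    ∃ i < l.length, IsOpenNbrSeq G (l.set i x) := by
  classical
  have hdom_all : ∀ w, G.Adj x w → ∃ v ∈ l.take l.length, G.Adj v w := by
    simpa only [List.take_length] using hdom
  have hex : ∃ n, ∀ w, G.Adj x w → ∃ v ∈ l.take n, G.Adj v w := ⟨_, hdom_all⟩
  obtain ⟨i, hi⟩ : ∃ i, Nat.find hex = i + 1 := Nat.exists_eq_succ_of_ne_zero fun h0 => by
    obtain ⟨v, hv, -⟩ := Nat.find_spec hex y hxy
    simp [h0] at hv
  have hlt : i < l.length := by
    have := Nat.find_min' hex hdom_all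
    omega
  obtain ⟨u, hxu, hu⟩ : ∃ u, G.Adj x u ∧ ∀ v ∈ l.take i, ¬ G.Adj v u := by
    simpa using Nat.find_min hex (by omega : i < Nat.find hex)
  exact ⟨i, hlt, hl.set hxl hxu hu (hi ▸ Nat.find_spec hex)⟩

end IsOpenNbrSeq

theorem exists_isGrundyTotalDomSeq [Fintype V] (G : SimpleGraph V) :
    ∃ l, IsGrundyTotalDomSeq G l := by
  set S := {k | ∃ l, IsOpenNbrSeq G l ∧ l.length = k}
  have hne : S.Nonempty := ⟨0, [], IsOpenNbrSeq.nil, rfl⟩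
  have hbdd : BddAbove S :=
    ⟨Fintype.card V, by rintro _ ⟨l, hl, rfl⟩; exact hl.1.length_le_card⟩
  obtain ⟨l, hl, hlen⟩ := Nat.sSup_mem hne hbdd
  exact ⟨l, hl, fun l' hl' => hlen ▸ le_csSup hbdd ⟨l', hl', rfl⟩⟩

theorem IsGrundyTotalDomSeq.exists_adj_of_adj_of_notMem (hl : IsGrundyTotalDomSeq G l)
    (hxl : x ∉ l) {w : V} (hxw : G.Adj x w) : ∃ v ∈ l, G.Adj v w := by
  by_contra! hw
  simpa using hl.2 _ (hl.1.append_singleton hxl hxw hw)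

end

theorem exists_grundyTotalDomSeq_containing_general {V : Type*} [Fintype V] (G : SimpleGraph V)
    (x : V) (hx : ∃ y : V, G.Adj x y) :
    ∃ l : List V, IsGrundyTotalDomSeq G l ∧ x ∈ l := by
  obtain ⟨l, hl⟩ := exists_isGrundyTotalDomSeq G
  by_cases hxl : x ∈ l
  · exact ⟨l, hl, hxl⟩
  obtain ⟨y, hxy⟩ := hx
  obtain ⟨i, hi, hset⟩ :=
    hl.1.exists_isOpenNbrSeq_set hxl hxy fun _ => hl.exists_adj_of_adj_of_notMem hxl
  refine ⟨l.set i x, ⟨hset, fun l' hl' => ?_⟩, List.mem_set hi x⟩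
  exact (hl.2 l' hl').trans_eq List.length_set.symm

/-- If `G` is a finite graph with at least one edge and `x` is a non-isolated vertex of
`G`, then there exists a Grundy total dominating sequence of `G` containing `x`. -/
theorem exists_grundyTotalDomSeq_containing {V : Type*} [Fintype V] (G : SimpleGraph V)
    (hG : G.edgeSet.Nonempty) (x : V) (hx : ∃ y : V, G.Adj x y) :
    ∃ l : List V, IsGrundyTotalDomSeq G l ∧ x ∈ l :=
  exists_grundyTotalDomSeq_containing_general G x hx
end

section
/- If T is a finite forest with no isolated vertices and no open twins, then T is an iso-unique Grundy total domination graph if and only if γ_gr^t(T) = n(T), where n(T) is the number of vertices of T. -/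
/-!
In a forest the Grundy total domination number is the number of vertices covered by a maximum
matching. Choosing for each vertex of an open neighbourhood sequence a neighbour that no earlier
vertex dominates (its footprint) gives distinct neighbours of distinct vertices, and in a forest
such a choice can be traded for a matching covering at least as many vertices. Conversely,
peeling off matched pairs `uᵢwᵢ` in which `uᵢ` has no other matched neighbour turns a matching
into the open neighbourhood sequence `u₁, …, u_k, w_k, …, w₁`. So the vertex sets of maximum
matchings are Grundy total dominating sets.

If no matching is perfect, rematching an unmatched vertex along alternating paths, which cannot
go on forever in a forest, yields a maximum matching missing a leaf `a`. Rematching `a` with its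
neighbour `b` unmatches the old partner `a'` of `b`; an automorphism between the two vertex sets
preserves their numbers of leaves, so `a'` is a leaf too, and `a`, `a'` are open twins at `b`.
If on the other hand `γ_gr^t(T) = n(T)`, the only Grundy total dominating set is `V`.
-/

section OpenNbrSeq

variable {V : Type*} {G : SimpleGraph V}

theorem IsGrundyTotalDomSeq.grundyTotalNum_eq {l : List V} (h : IsGrundyTotalDomSeq G l) :
    grundyTotalNum G = l.length :=
  IsGreatest.csSup_eq ⟨⟨l, h.1, rfl⟩, by rintro _ ⟨l', hl', rfl⟩; exact h.2 l' hl'⟩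

theorem IsGrundyTotalDomSet.eq_univ [Fintype V] (hcard : grundyTotalNum G = Fintype.card V)
    {A : Set V} (hA : IsGrundyTotalDomSet G A) : A = Set.univ := by
  classical
  obtain ⟨l, hl, rfl⟩ := hA
  have hlen : l.toFinset.card = Fintype.card V := by
    rw [List.toFinset_card_of_nodup hl.1.1, ← hl.grundyTotalNum_eq, hcard]
  ext v
  simp [← List.mem_toFinset, Finset.eq_univ_of_card _ hlen]

theorem isoUniqueGrundyTotalDom_of_grundyTotalNum_eq_card [Fintype V]
    (hcard : grundyTotalNum G = Fintype.card V) : IsoUniqueGrundyTotalDom G := by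
  intro A B hA hB
  rw [hA.eq_univ hcard, hB.eq_univ hcard]
  exact ⟨.refl, Set.image_id _⟩

theorem IsOpenNbrSeq.exists_injOn {l : List V} (h : IsOpenNbrSeq G l) :
    ∃ σ : V → V, (∀ v ∈ l, G.Adj v (σ v)) ∧ Set.InjOn σ {v | v ∈ l} := by
  classical
  obtain ⟨hnd, hw⟩ := h
  choose w hadj hnew using hw
  have hw_inj : Function.Injective w := by
    intro i j hij
    by_contra hne
    rcases Fin.lt_or_lt_of_ne hne with hlt | hlt
    · exact hnew j i hlt (hij ▸ hadj i)
    · exact hnew i j hlt (hij ▸ hadj j)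
  let idx (v : V) (hv : v ∈ l) : Fin l.length := ⟨l.idxOf v, List.idxOf_lt_length_of_mem hv⟩
  have hget (v : V) (hv : v ∈ l) : l.get (idx v hv) = v := List.getElem_idxOf _
  refine ⟨fun v => if hv : v ∈ l then w (idx v hv) else v, fun v hv => ?_,
    fun v hv v' hv' he => ?_⟩
  · have := hadj (idx v hv)
    rw [hget v hv] at this
    simpa [hv] using this
  · simp only [Set.mem_ofPred_eq] at hv hv'
    simp only [hv, hv', dite_true] at he
    rw [← hget v hv, ← hget v' hv', hw_inj he]

end OpenNbrSeq

theorem Finset.card_filter_eq_of_image_eq {α : Type*} (φ : α ≃ α) {P : α → Prop}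
    [DecidablePred P] (hP : ∀ x, P (φ x) ↔ P x) {s t : Finset α} (h : φ '' s = t) :
    (s.filter P).card = (t.filter P).card := by
  obtain rfl : t = s.map φ.toEmbedding := Finset.coe_injective (by simp [← h])
  rw [Finset.filter_map, Finset.card_map]
  exact congrArg Finset.card (Finset.filter_congr fun x _ => (hP x).symm)

namespace SimpleGraph

variable {V : Type*} {G : SimpleGraph V} {f : V → V} {s : Finset V}

theorem IsAcyclic.exists_backtrack [Finite V] (hG : G.IsAcyclic) (p : ℕ → V)
    (hp : ∀ n, G.Adj (p n) (p (n + 1))) : ∃ n, p (n + 2) = p n := by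
  classical
  by_contra! hback
  have hper : ∃ d, 0 < d ∧ ∃ i, p (i + d) = p i := by
    obtain ⟨x, y, hxy, he⟩ := Finite.exists_ne_map_eq_of_infinite p
    rcases hxy.lt_or_gt with h | h
    · exact ⟨y - x, by omega, x, by rw [Nat.add_sub_cancel' h.le, he]⟩
    · exact ⟨x - y, by omega, y, by rw [Nat.add_sub_cancel' h.le, he]⟩
  obtain ⟨hd, i, hi⟩ := Nat.find_spec hper
  set d := Nat.find hper
  have hmin : ∀ k, 0 < k → k < d → ∀ j, p (j + k) ≠ p j :=
    fun k hk hkd j hj => Nat.find_min hper hkd ⟨hk, j, hj⟩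
  -- The shortest closed stretch `p i, …, p (i + d) = p i` goes back from `p (i + 1)` to `p i`
  -- without using the edge between them, which is a bridge.
  have hreach : ∀ k, 1 ≤ k → k ≤ d →
      (G.deleteEdges {s(p i, p (i + 1))}).Reachable (p (i + 1)) (p (i + k)) := by
    intro k hk hkd
    induction k, hk using Nat.le_induction with
    | base => rfl
    | succ k hk ih =>
      refine (ih (by omega)).trans (Adj.reachable ?_)
      rw [deleteEdges_adj, Set.mem_singleton_iff, Sym2.eq_iff]
      refine ⟨hp (i + k), ?_⟩
      rintro (⟨h, -⟩ | ⟨h, h'⟩)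
      · exact hmin k hk (by omega) i h
      · obtain rfl | hk2 := hk.eq_or_lt
        · exact hback i h'
        · refine hmin (k - 1) (by omega) (by omega) (i + 1) ?_
          rwa [show i + 1 + (k - 1) = i + k by omega]
  have hbridge := isAcyclic_iff_forall_adj_isBridge.mp hG (hp i)
  rw [isBridge_iff] at hbridge
  exact hbridge (hi ▸ hreach _ hd le_rfl).symm

theorem IsAcyclic.exists_alternating_backtrack [Finite V] (hG : G.IsAcyclic) (a b : ℕ → V)
    (hab : ∀ n, G.Adj (a n) (b n)) (hba : ∀ n, G.Adj (b n) (a (n + 1))) :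
    ∃ n, a (n + 1) = a n ∨ b (n + 1) = b n := by
  let p n := if Even n then a (n / 2) else b (n / 2)
  have hp_even (k : ℕ) : p (2 * k) = a k := by simp [p]
  have hp_odd (k : ℕ) : p (2 * k + 1) = b k := by simp [p, show (2 * k + 1) / 2 = k by omega]
  obtain ⟨n, hn⟩ := hG.exists_backtrack p fun n => by
    obtain ⟨k, rfl | rfl⟩ := Nat.even_or_odd' n
    · rw [hp_even, hp_odd]; exact hab k
    · rw [show 2 * k + 1 + 1 = 2 * (k + 1) by ring, hp_even, hp_odd]; exact hba k
  obtain ⟨k, rfl | rfl⟩ := Nat.even_or_odd' n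
  · rw [show 2 * k + 2 = 2 * (k + 1) by ring, hp_even, hp_even] at hn
    exact ⟨k, .inl hn⟩
  · rw [show 2 * k + 1 + 2 = 2 * (k + 1) + 1 by ring, hp_odd, hp_odd] at hn
    exact ⟨k, .inr hn⟩

/-- `f` is the partner map of a perfect matching of the induced subgraph `G[s]`. -/
def IsMatchingOn (G : SimpleGraph V) (f : V → V) (s : Finset V) : Prop :=
  ∀ v ∈ s, G.Adj v (f v) ∧ f v ∈ s ∧ f (f v) = v

def IsMaxMatchingOn (G : SimpleGraph V) (f : V → V) (s : Finset V) : Prop :=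
  G.IsMatchingOn f s ∧ ∀ g t, G.IsMatchingOn g t → t.card ≤ s.card

theorem isMatchingOn_empty (f : V → V) : G.IsMatchingOn f ∅ := by
  simp [IsMatchingOn]

section DecidableEq

variable [DecidableEq V]

theorem IsMatchingOn.erase_pair (h : G.IsMatchingOn f s) {v : V} (hv : v ∈ s) :
    G.IsMatchingOn f ((s.erase v).erase (f v)) := by
  intro x hx
  simp only [Finset.mem_erase] at hx
  obtain ⟨hxfv, hxv, hxs⟩ := hx
  obtain ⟨hadj, hfx, hffx⟩ := h x hxs
  refine ⟨hadj, ?_, hffx⟩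
  simp only [Finset.mem_erase]
  refine ⟨fun he => hxv ?_, fun he => hxfv ?_, hfx⟩
  · rw [← hffx, he, (h v hv).2.2]
  · rw [← hffx, he]

theorem IsMatchingOn.insert_pair (h : G.IsMatchingOn f s) {u w : V} (hu : u ∉ s) (hw : w ∉ s)
    (huw : G.Adj u w) :
    G.IsMatchingOn (Function.update (Function.update f u w) w u) (insert u (insert w s)) := by
  have hne := huw.ne
  intro x hx
  simp only [Finset.mem_insert] at hx
  obtain rfl | rfl | hxs := hx
  · simp [hne, huw]
  · simp [hne, huw.symm]
  · obtain ⟨hadj, hfx, hffx⟩ := h x hxs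
    have hx : x ≠ u ∧ x ≠ w := ⟨by rintro rfl; exact hu hxs, by rintro rfl; exact hw hxs⟩
    have hfx' : f x ≠ u ∧ f x ≠ w := ⟨fun e => hu (e ▸ hfx), fun e => hw (e ▸ hfx)⟩
    simp [hx, hfx', hadj, hfx, hffx]

theorem IsMatchingOn.swap (h : G.IsMatchingOn f s) {a b : V} (ha : a ∉ s) (hb : b ∈ s)
    (hab : G.Adj a b) :
    G.IsMatchingOn (Function.update (Function.update f a b) b a) (insert a (s.erase (f b))) := by
  have hfb : f b ≠ b := (h b hb).1.ne'
  have hset : insert b ((s.erase b).erase (f b)) = s.erase (f b) := by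
    rw [Finset.erase_right_comm, Finset.insert_erase (Finset.mem_erase.2 ⟨hfb.symm, hb⟩)]
  have := (h.erase_pair hb).insert_pair (u := a) (w := b) (by simp [ha]) (by simp) hab
  rwa [hset] at this

theorem IsMaxMatchingOn.mem_of_adj (h : G.IsMaxMatchingOn f s) {a b : V} (ha : a ∉ s)
    (hab : G.Adj a b) : b ∈ s := by
  by_contra hb
  have := h.2 _ _ (h.1.insert_pair ha hb hab)
  rw [Finset.card_insert_of_notMem (by simp [hab.ne, ha]), Finset.card_insert_of_notMem hb] at this
  omega

theorem IsMaxMatchingOn.swap (h : G.IsMaxMatchingOn f s) {a b : V} (ha : a ∉ s) (hab : G.Adj a b) :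
    G.IsMaxMatchingOn (Function.update (Function.update f a b) b a) (insert a (s.erase (f b))) := by
  have hb := h.mem_of_adj ha hab
  refine ⟨h.1.swap ha hb hab, fun g t hg => ?_⟩
  rw [Finset.card_insert_of_notMem (fun h => ha (Finset.mem_of_mem_erase h)),
    Finset.card_erase_add_one (h.1 b hb).2.1]
  exact h.2 g t hg

end DecidableEq

theorem exists_isMaxMatchingOn [Finite V] (G : SimpleGraph V) : ∃ f s, G.IsMaxMatchingOn f s := by
  classical
  have := Fintype.ofFinite V
  obtain ⟨s, hs, hmax⟩ := Finset.exists_max_image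
    (Finset.univ.filter fun s : Finset V => ∃ f, G.IsMatchingOn f s) Finset.card
    ⟨∅, by simpa using ⟨id, isMatchingOn_empty id⟩⟩
  obtain ⟨f, hf⟩ := (Finset.mem_filter.1 hs).2
  exact ⟨f, s, hf, fun g t hg => hmax t (by simpa using ⟨g, hg⟩)⟩

/-- A recursive form of `IsOpenNbrSeq`, in which the vertices of `D` count as already
dominated and the footprints are taken in `s`. -/
def HasFootprints (G : SimpleGraph V) (s : Set V) : Set V → List V → Prop
  | _, [] => True
  | D, v :: l => (∃ w ∈ s, G.Adj v w ∧ w ∉ D) ∧ G.HasFootprints s (D ∪ G.neighborSet v) l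

theorem HasFootprints.mono {s s' D D' : Set V} {l : List V} (h : G.HasFootprints s D l)
    (hs : s ⊆ s') (hD : ∀ w ∈ s, w ∈ D' → w ∈ D) : G.HasFootprints s' D' l := by
  induction l generalizing D D' with
  | nil => trivial
  | cons v l ih =>
    obtain ⟨⟨w, hws, hvw, hwD⟩, hl⟩ := h
    refine ⟨⟨w, hs hws, hvw, fun hw => hwD (hD w hws hw)⟩, ih hl fun x hx => ?_⟩
    rintro (hxD | hxv)
    exacts [.inl (hD x hx hxD), .inr hxv]

theorem HasFootprints.append {s D : Set V} {l₁ l₂ : List V} (h₁ : G.HasFootprints s D l₁)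
    (h₂ : G.HasFootprints s (D ∪ {w | ∃ v ∈ l₁, G.Adj v w}) l₂) :
    G.HasFootprints s D (l₁ ++ l₂) := by
  induction l₁ generalizing D with
  | nil => exact h₂.mono le_rfl (by simp)
  | cons v l₁ ih =>
    refine ⟨h₁.1, ih h₁.2 (h₂.mono le_rfl fun x _ hx => ?_)⟩
    simp only [Set.mem_union, mem_neighborSet, Set.mem_ofPred_eq, List.mem_cons] at hx ⊢
    aesop

theorem HasFootprints.exists_footprint {s D : Set V} {l : List V} (h : G.HasFootprints s D l)
    (i : Fin l.length) : ∃ w, G.Adj (l.get i) w ∧ w ∉ D ∧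
      ∀ j : Fin l.length, (j : ℕ) < i → ¬ G.Adj (l.get j) w := by
  induction l generalizing D with
  | nil => exact i.elim0
  | cons v l ih =>
    obtain ⟨⟨w, -, hvw, hwD⟩, hl⟩ := h
    induction i using Fin.cases with
    | zero => exact ⟨w, hvw, hwD, fun j hj => absurd hj (Nat.not_lt_zero _)⟩
    | succ i =>
      obtain ⟨x, hix, hxD, hprev⟩ := ih hl i
      refine ⟨x, hix, fun hx => hxD (.inl hx), fun j hj => ?_⟩
      induction j using Fin.cases with
      | zero => exact fun hvx => hxD (.inr hvx)
      | succ j => exact hprev j (by simpa using hj)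

theorem HasFootprints.isOpenNbrSeq {s D : Set V} {l : List V} (hl : l.Nodup)
    (h : G.HasFootprints s D l) : IsOpenNbrSeq G l :=
  ⟨hl, fun i => (h.exists_footprint i).imp fun _ hw => ⟨hw.1, hw.2.2⟩⟩

theorem IsAcyclic.exists_mem_forall_apply_eq [Finite V] (hG : G.IsAcyclic) {σ : V → V}
    {S : Set V} (hS : S.Nonempty) (hadj : ∀ v ∈ S, G.Adj v (σ v)) :
    ∃ v ∈ S, ∀ x ∈ S, σ x = v → x = σ v := by
  by_contra! h
  -- Going backwards along `σ`-preimages other than `σ v` never backtracks.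
  choose! pre hpreS hpre hpre_ne using h
  obtain ⟨v₀, hv₀⟩ := hS
  have hmem (k : ℕ) : pre^[k] v₀ ∈ S := by
    induction k with
    | zero => exact hv₀
    | succ k ih => rw [Function.iterate_succ_apply']; exact hpreS _ ih
  obtain ⟨n, hn⟩ := hG.exists_backtrack (fun k => pre^[k] v₀) fun k => by
    have := hadj _ (hpreS _ (hmem k))
    rw [hpre _ (hmem k)] at this
    simpa only [Function.iterate_succ_apply'] using this.symm
  simp only [Function.iterate_succ_apply'] at hn
  exact hpre_ne _ (hpreS _ (hmem n)) (hn.trans (hpre _ (hmem n)).symm)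

theorem IsAcyclic.exists_isMatchingOn_of_injOn [Finite V] (hG : G.IsAcyclic) {σ : V → V}
    (S : Finset V) (hadj : ∀ v ∈ S, G.Adj v (σ v)) (hσ : Set.InjOn σ S) :
    ∃ f t, G.IsMatchingOn f t ∧ (t : Set V) ⊆ S ∪ σ '' S ∧ S.card ≤ t.card := by
  classical
  induction S using Finset.strongInduction with
  | H S ih =>
  rcases S.eq_empty_or_nonempty with rfl | hS
  · exact ⟨id, ∅, isMatchingOn_empty id, by simp, le_rfl⟩
  obtain ⟨v, hv, hpre⟩ := hG.exists_mem_forall_apply_eq (S := S) hS hadj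
  set S' := (S.erase v).erase (σ v) with hS'
  have hS'S : S' ⊆ S := (Finset.erase_subset _ _).trans (Finset.erase_subset _ _)
  obtain ⟨f, t, hf, hts, hcard⟩ := ih S' ((Finset.erase_subset _ _).trans_ssubset
    (Finset.erase_ssubset hv)) (fun x hx => hadj x (hS'S hx)) (hσ.mono hS'S)
  have hvt : v ∉ t := fun h => by
    rcases hts h with h | ⟨x, hx, hxv⟩
    · simp [hS'] at h
    · have := hpre x (hS'S hx) hxv
      simp [hS', this] at hx
  have hσvt : σ v ∉ t := fun h => by
    rcases hts h with h | ⟨x, hx, hxv⟩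
    · simp [hS'] at h
    · have := hσ (hS'S hx) hv hxv
      simp [hS', this] at hx
  refine ⟨_, _, hf.insert_pair hvt hσvt (hadj v hv), fun x hx => ?_, ?_⟩
  · simp only [Finset.coe_insert, Set.mem_insert_iff] at hx
    rcases hx with hx | hx | hx
    · exact .inl (hx ▸ hv)
    · exact .inr ⟨v, hv, hx.symm⟩
    · exact (hts hx).imp (fun h => hS'S h) fun ⟨y, hy, hyx⟩ => ⟨y, hS'S hy, hyx⟩
  · rw [Finset.card_insert_of_notMem (by simp [hvt, (hadj v hv).ne]),
      Finset.card_insert_of_notMem hσvt]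
    have h1 := Finset.card_erase_add_one hv
    have h2 : (S.erase v).card - 1 ≤ S'.card := Finset.pred_card_le_card_erase
    omega

theorem IsAcyclic.length_le_card_of_isMaxMatchingOn [Finite V] (hG : G.IsAcyclic)
    (hs : G.IsMaxMatchingOn f s) {l : List V} (hl : IsOpenNbrSeq G l) : l.length ≤ s.card := by
  classical
  obtain ⟨σ, hadj, hσ⟩ := hl.exists_injOn
  obtain ⟨g, t, hg, -, hcard⟩ := hG.exists_isMatchingOn_of_injOn l.toFinset
    (by simpa using hadj) (by rwa [List.coe_toFinset])
  rw [← List.toFinset_card_of_nodup hl.1]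
  exact hcard.trans (hs.2 g t hg)

theorem IsAcyclic.exists_forall_adj_eq_of_isMatchingOn [Finite V] (hG : G.IsAcyclic)
    (hf : G.IsMatchingOn f s) (hs : s.Nonempty) : ∃ u ∈ s, ∀ x ∈ s, G.Adj u x → x = f u := by
  by_contra! h
  -- Alternating between matching edges and other edges inside `s` never backtracks.
  choose! g hgs hadj hne using h
  obtain ⟨v₀, hv₀⟩ := hs
  have hmem (k : ℕ) : (g ∘ f)^[k] v₀ ∈ s := by
    induction k with
    | zero => exact hv₀
    | succ k ih => rw [Function.iterate_succ_apply']; exact hgs _ (hf _ ih).2.1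
  obtain ⟨n, hn | hn⟩ := hG.exists_alternating_backtrack (fun k => (g ∘ f)^[k] v₀)
    (fun k => f ((g ∘ f)^[k] v₀)) (fun k => (hf _ (hmem k)).1) fun k => by
      rw [Function.iterate_succ_apply']
      exact hadj _ (hf _ (hmem k)).2.1
  all_goals
    simp only [Function.iterate_succ_apply', Function.comp_apply] at hn
    obtain ⟨-, hfy, hffy⟩ := hf _ (hmem n)
  · exact hne _ hfy (hn.trans hffy.symm)
  · obtain ⟨-, -, hfg⟩ := hf _ (hgs _ hfy)
    exact hne _ hfy (by rw [← hfg, hn])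

theorem IsAcyclic.exists_hasFootprints_of_isMatchingOn [Finite V] [DecidableEq V]
    (hG : G.IsAcyclic) (s : Finset V) (hf : G.IsMatchingOn f s) :
    ∃ l : List V, l.Nodup ∧ l.toFinset = s ∧ G.HasFootprints s ∅ l := by
  induction s using Finset.strongInduction with
  | H s ih =>
  rcases s.eq_empty_or_nonempty with rfl | hs
  · exact ⟨[], List.nodup_nil, rfl, trivial⟩
  obtain ⟨u, hu, hleaf⟩ := hG.exists_forall_adj_eq_of_isMatchingOn hf hs
  obtain ⟨huw, hw, -⟩ := hf u hu
  set s' := (s.erase u).erase (f u) with hs'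
  have hs's : s' ⊆ s := (Finset.erase_subset _ _).trans (Finset.erase_subset _ _)
  obtain ⟨l, hnd, hls, hl⟩ := ih s' ((Finset.erase_subset _ _).trans_ssubset
    (Finset.erase_ssubset hu)) (hf.erase_pair hu)
  have hmem (x : V) : x ∈ l ↔ x ∈ s' := by rw [← hls, List.mem_toFinset]
  have hfree : ∀ x ∈ s', ¬ G.Adj u x := fun x hx hux => by
    have := hleaf x (hs's hx) hux
    simp [hs', this] at hx
  refine ⟨u :: (l ++ [f u]), ?_, ?_, ⟨⟨f u, hw, huw, id⟩, ?_⟩⟩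
  · simp +contextual [List.nodup_cons, List.nodup_append, hnd, hmem, hs', huw.ne]
  · ext x
    simp only [List.toFinset_cons, List.toFinset_append, Finset.mem_insert, Finset.mem_union,
      List.mem_toFinset, hmem, hs', Finset.mem_erase, List.toFinset_cons, List.toFinset_nil]
    grind
  · refine (hl.mono (Finset.coe_subset.2 hs's) fun x hx hxu => ?_).append
      ⟨⟨u, hu, huw.symm, ?_⟩, trivial⟩
    · exact absurd (hxu.resolve_left id) (hfree x hx)
    · rintro ((h | h) | ⟨x, hx, hxu⟩)
      exacts [h, G.irrefl h, hfree x ((hmem x).1 hx) hxu.symm]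

theorem IsAcyclic.exists_isGrundyTotalDomSeq [Finite V] [DecidableEq V] (hG : G.IsAcyclic)
    (hs : G.IsMaxMatchingOn f s) : ∃ l, IsGrundyTotalDomSeq G l ∧ l.toFinset = s := by
  obtain ⟨l, hnd, hls, hl⟩ := hG.exists_hasFootprints_of_isMatchingOn s hs.1
  have hlen : l.length = s.card := by rw [← hls, List.toFinset_card_of_nodup hnd]
  refine ⟨l, ⟨hl.isOpenNbrSeq hnd, fun l' hl' => ?_⟩, hls⟩
  exact hlen ▸ hG.length_le_card_of_isMaxMatchingOn hs hl'

theorem IsAcyclic.isGrundyTotalDomSet [Finite V] (hG : G.IsAcyclic)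
    (hs : G.IsMaxMatchingOn f s) : IsGrundyTotalDomSet G s := by
  classical
  obtain ⟨l, hl, hls⟩ := hG.exists_isGrundyTotalDomSeq hs
  exact ⟨l, hl, by ext; simp [← hls]⟩

theorem Iso.existsUnique_adj_iff {W : Type*} {G' : SimpleGraph W} (φ : G ≃g G') (v : V) :
    (∃! w, G'.Adj (φ v) w) ↔ ∃! w, G.Adj v w := by
  rw [φ.bijective.existsUnique_iff]
  simp only [φ.map_adj_iff]

structure ExposedEdge (G : SimpleGraph V) where
  f : V → V
  s : Finset V
  a : V
  b : V
  isMaxMatchingOn : G.IsMaxMatchingOn f s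
  a_notMem : a ∉ s
  adj : G.Adj a b

namespace ExposedEdge

variable [DecidableEq V] (e : G.ExposedEdge)

def swap {b : V} (h : G.Adj e.a b) : G.ExposedEdge where
  f := Function.update (Function.update e.f e.a b) b e.a
  s := insert e.a (e.s.erase (e.f b))
  a := e.f b
  b := b
  isMaxMatchingOn := e.isMaxMatchingOn.swap e.a_notMem h
  a_notMem := by
    have hfb := (e.isMaxMatchingOn.1 b (e.isMaxMatchingOn.mem_of_adj e.a_notMem h)).2.1
    have hne : e.f b ≠ e.a := fun he => e.a_notMem (he ▸ hfb)
    simp [hne]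
  adj := (e.isMaxMatchingOn.1 b (e.isMaxMatchingOn.mem_of_adj e.a_notMem h)).1.symm

theorem swap_a_ne {b : V} (h : G.Adj e.a b) : (e.swap h).a ≠ e.a := fun he =>
  e.a_notMem (he ▸ (e.isMaxMatchingOn.1 b (e.isMaxMatchingOn.mem_of_adj e.a_notMem h)).2.1)

theorem neighborSet_swap_eq (hleaf : ∃! w, G.Adj e.a w)
    (hiso : ∀ f s f' s', G.IsMaxMatchingOn f s → G.IsMaxMatchingOn f' s' →
      ∃ φ : G ≃g G, φ '' s = s') :
    G.neighborSet (e.swap e.adj).a = G.neighborSet e.a := by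
  classical
  set e' := e.swap e.adj
  obtain ⟨φ, hφ⟩ := hiso _ _ _ _ e.isMaxMatchingOn e'.isMaxMatchingOn
  have hcount := Finset.card_filter_eq_of_image_eq φ.toEquiv
    (P := fun v => ∃! w, G.Adj v w) (fun v => φ.existsUnique_adj_iff v) hφ
  -- `e'.s` trades `e'.a` for the leaf `e.a`, so it can only have as many leaves as `e.s`
  -- if `e'.a` is a leaf too.
  have he's : e'.s = insert e.a (e.s.erase e'.a) := rfl
  have hleaf' : ∃! w, G.Adj e'.a w := by
    by_contra hnot
    rw [he's, Finset.filter_insert, if_pos hleaf, Finset.filter_erase,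
      Finset.erase_eq_of_notMem (by simp [hnot]),
      Finset.card_insert_of_notMem (by simp [e.a_notMem])] at hcount
    omega
  have hb : ∀ v, (∃! w, G.Adj v w) → G.Adj v e.b → G.neighborSet v = {e.b} := by
    intro v ⟨w, hw, huniq⟩ hvb
    ext x
    simp only [mem_neighborSet, Set.mem_singleton_iff]
    exact ⟨fun hx => (huniq x hx).trans (huniq _ hvb).symm, fun hx => hx ▸ hvb⟩
  rw [hb _ hleaf' e'.adj, hb _ hleaf e.adj]

end ExposedEdge

theorem IsAcyclic.exists_exposedEdge_existsUnique_adj [Finite V] [DecidableEq V]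
    (hG : G.IsAcyclic) (e : G.ExposedEdge) : ∃ e' : G.ExposedEdge, ∃! w, G.Adj e'.a w := by
  by_contra! h
  have hnext (e' : G.ExposedEdge) : ∃ b, ∃ _ : G.Adj e'.a b, b ≠ e'.b := by
    by_contra! hb
    exact h e' ⟨e'.b, e'.adj, hb⟩
  -- Rematching `a` with a neighbour other than `b` over and over never backtracks.
  choose nb hnb hne using hnext
  let E (k : ℕ) : G.ExposedEdge := (fun e' => e'.swap (hnb e'))^[k] e
  have hE (k : ℕ) : E (k + 1) = (E k).swap (hnb (E k)) := Function.iterate_succ_apply' _ _ _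
  obtain ⟨n, hn | hn⟩ := hG.exists_alternating_backtrack (fun k => (E k).a)
    (fun k => (E (k + 1)).b) (fun k => by rw [hE]; exact hnb (E k))
    (fun k => (E (k + 1)).adj.symm)
  · exact (E n).swap_a_ne (hnb (E n)) (by rw [← hE]; exact hn)
  · rw [hE] at hn
    exact hne _ hn

theorem IsAcyclic.grundyTotalNum_eq_card [Fintype V] (hG : G.IsAcyclic)
    (hnoiso : ∀ v, ∃ w, G.Adj v w)
    (hnotwin : ∀ u v : V, u ≠ v → G.neighborSet u ≠ G.neighborSet v)
    (hiso : IsoUniqueGrundyTotalDom G) : grundyTotalNum G = Fintype.card V := by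
  classical
  obtain ⟨f, s, hs⟩ := G.exists_isMaxMatchingOn
  have huniv : s = Finset.univ := by
    by_contra hne
    obtain ⟨u, -, hu⟩ := Finset.exists_mem_notMem_of_card_lt_card
      (Finset.card_lt_card (Finset.ssubset_univ_iff.2 hne))
    obtain ⟨b, hub⟩ := hnoiso u
    obtain ⟨e, hleaf⟩ := hG.exists_exposedEdge_existsUnique_adj ⟨f, s, u, b, hs, hu, hub⟩
    exact hnotwin _ _ (e.swap_a_ne e.adj) (e.neighborSet_swap_eq hleaf fun _ _ _ _ h h' =>
      hiso _ _ (hG.isGrundyTotalDomSet h) (hG.isGrundyTotalDomSet h'))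
  obtain ⟨l, hl, hls⟩ := hG.exists_isGrundyTotalDomSeq hs
  rw [hl.grundyTotalNum_eq, ← List.toFinset_card_of_nodup hl.1.1, hls, huniv, Finset.card_univ]

end SimpleGraph

/-- A finite forest with no isolated vertices and no open twins is an iso-unique Grundy
total domination graph iff its Grundy total domination number equals its number of
vertices. -/
theorem isoUniqueGrundyTotalDom_forest_iff {V : Type*} [Fintype V] (T : SimpleGraph V)
    (hforest : T.IsAcyclic)
    (hnoiso : ∀ v : V, ∃ w : V, T.Adj v w)
    (hnotwin : ∀ u v : V, u ≠ v → T.neighborSet u ≠ T.neighborSet v) :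
    IsoUniqueGrundyTotalDom T ↔ grundyTotalNum T = Fintype.card V :=
  ⟨hforest.grundyTotalNum_eq_card hnoiso hnotwin, isoUniqueGrundyTotalDom_of_grundyTotalNum_eq_card⟩
end

section
/- If G is a finite simple graph and x is an arbitrary vertex of G, then there exists an L-Grundy dominating sequence of G (that is, an L-sequence of maximum length) whose set of vertices contains x. -/
/-!
Take an L-sequence `l` of maximum length not containing `x`, and let `i` be the largest index
at which `x` could still footprint a vertex `w ∈ N[x]`, i.e. `w` has no neighbour among
`l[0], …, l[i-1]` (index `0` always qualifies, with `w = x`). Replacing `l[i]` by `x` gives an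
L-sequence of the same length: if the footprint `u` of some later `l[r]` were a neighbour of `x`,
then `u` would be a footprint for `x` at index `r > i`.
-/

/-- An L-sequence in `G`: a list of distinct vertices such that each vertex has a vertex
in its closed neighborhood which is not in the open neighborhood of any earlier
vertex. -/
def IsLSeq {V : Type*} (G : SimpleGraph V) (l : List V) : Prop :=
  l.Nodup ∧ ∀ i : Fin l.length, ∃ w : V, (w = l.get i ∨ G.Adj (l.get i) w) ∧
    ∀ j : Fin l.length, (j : ℕ) < (i : ℕ) → ¬ G.Adj (l.get j) w

/-- The L-Grundy domination number of `G`: the maximum length of an L-sequence. -/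
noncomputable def grundyLNum {V : Type*} (G : SimpleGraph V) : ℕ :=
  sSup {k : ℕ | ∃ l : List V, IsLSeq G l ∧ l.length = k}

/-- An L-Grundy dominating sequence: an L-sequence of maximum length. -/
def IsLGrundyDomSeq {V : Type*} (G : SimpleGraph V) (l : List V) : Prop :=
  IsLSeq G l ∧ ∀ l' : List V, IsLSeq G l' → l'.length ≤ l.length

/-- An L-Grundy dominating set of `G`: the set of vertices of some L-Grundy dominating
sequence of `G`. -/
def IsLGrundyDomSet {V : Type*} (G : SimpleGraph V) (A : Set V) : Prop :=
  ∃ l : List V, IsLGrundyDomSeq G l ∧ {v : V | v ∈ l} = A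

/-- `w` is footprinted by `v` at position `i` of `l`: the condition an L-sequence imposes on
its `i`-th entry, with `v` in place of `l[i]`. -/
def IsLFootprint {V : Type*} (G : SimpleGraph V) (l : List V) (i : ℕ) (v w : V) : Prop :=
  (w = v ∨ G.Adj v w) ∧ ∀ j (hj : j < l.length), j < i → ¬ G.Adj l[j] w

section

variable {V : Type*} {G : SimpleGraph V} {l : List V}

theorem isLSeq_iff_exists_isLFootprint :
    IsLSeq G l ↔ l.Nodup ∧ ∀ i (hi : i < l.length), ∃ w, IsLFootprint G l i l[i] w := by
  refine and_congr_right fun _ => ⟨fun h i hi => ?_, fun h i => ?_⟩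
  · obtain ⟨w, hw, hprev⟩ := h ⟨i, hi⟩
    exact ⟨w, hw, fun j hj hji => hprev ⟨j, hj⟩ hji⟩
  · obtain ⟨w, hw, hprev⟩ := h i i.2
    exact ⟨w, hw, fun j hji => hprev j j.2 hji⟩

theorem isLSeq_nil (G : SimpleGraph V) : IsLSeq G [] :=
  ⟨List.nodup_nil, fun i => i.elim0⟩

theorem isLSeq_singleton (G : SimpleGraph V) (x : V) : IsLSeq G [x] :=
  isLSeq_iff_exists_isLFootprint.2
    ⟨List.nodup_singleton x, fun i hi => ⟨x, Or.inl (by simp), fun j _ hji => by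
      simp only [List.length_singleton] at hi; omega⟩⟩

theorem IsLFootprint.set {i r : ℕ} {v w x : V} (h : IsLFootprint G l r v w)
    (hx : i < r → ¬ G.Adj x w) : IsLFootprint G (l.set i x) r v w := by
  refine ⟨h.1, fun j hj hjr => ?_⟩
  rw [List.length_set] at hj
  rcases eq_or_ne i j with rfl | hij
  · simpa using hx hjr
  · simpa [List.getElem_set_ne hij] using h.2 j hj hjr

theorem IsLSeq.set_of_forall_gt_not_isLFootprint {i : ℕ} {x w : V} (hl : IsLSeq G l)
    (hxl : x ∉ l) (hw : IsLFootprint G l i x w)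
    (hlast : ∀ r (_ : r < l.length) u, i < r → ¬ IsLFootprint G l r x u) :
    IsLSeq G (l.set i x) := by
  rw [isLSeq_iff_exists_isLFootprint] at hl ⊢
  refine ⟨hl.1.set hxl, fun r hr => ?_⟩
  rw [List.length_set] at hr
  rcases eq_or_ne i r with rfl | hir
  · exact ⟨w, by simpa using hw.set (x := x) fun h => absurd h (lt_irrefl i)⟩
  · obtain ⟨u, hu⟩ := hl.2 r hr
    have hu' := hu.set (i := i) fun hlt hxu => hlast r hr u hlt ⟨Or.inr hxu, hu.2⟩
    exact ⟨u, by simpa [List.getElem_set_ne hir] using hu'⟩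

theorem IsLSeq.exists_set_isLSeq (hl : IsLSeq G l) {x : V} (hxl : x ∉ l)
    (hpos : 0 < l.length) : ∃ i < l.length, IsLSeq G (l.set i x) := by
  classical
  let P : ℕ → Prop := fun r => ∃ w, IsLFootprint G l r x w
  have hP0 : P 0 := show ∃ w, _ from ⟨x, Or.inl rfl, fun _ _ hj => absurd hj (Nat.not_lt_zero _)⟩
  set i := Nat.findGreatest P (l.length - 1)
  have hi : i < l.length := (Nat.findGreatest_le _).trans_lt (by omega)
  obtain ⟨w, hw⟩ : P i := Nat.findGreatest_spec (Nat.zero_le _) hP0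
  refine ⟨i, hi, hl.set_of_forall_gt_not_isLFootprint hxl hw fun r hr u hir hu => ?_⟩
  exact Nat.findGreatest_is_greatest hir (by omega) ⟨u, hu⟩

theorem bddAbove_isLSeq_lengths [Fintype V] (G : SimpleGraph V) :
    BddAbove {k : ℕ | ∃ l : List V, IsLSeq G l ∧ l.length = k} :=
  ⟨Fintype.card V, by rintro _ ⟨l, hl, rfl⟩; exact hl.1.length_le_card⟩

theorem IsLSeq.length_le_grundyLNum [Fintype V] (hl : IsLSeq G l) : l.length ≤ grundyLNum G :=
  le_csSup (bddAbove_isLSeq_lengths G) ⟨l, hl, rfl⟩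

theorem exists_isLSeq_length_eq_grundyLNum [Fintype V] (G : SimpleGraph V) :
    ∃ l : List V, IsLSeq G l ∧ l.length = grundyLNum G :=
  Nat.sSup_mem (s := {k : ℕ | ∃ l : List V, IsLSeq G l ∧ l.length = k})
    ⟨0, [], isLSeq_nil G, rfl⟩ (bddAbove_isLSeq_lengths G)

theorem exists_isLGrundyDomSeq [Fintype V] (G : SimpleGraph V) :
    ∃ l : List V, IsLGrundyDomSeq G l := by
  obtain ⟨l, hl, hlen⟩ := exists_isLSeq_length_eq_grundyLNum G
  exact ⟨l, hl, fun l' hl' => hlen ▸ hl'.length_le_grundyLNum⟩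

end

/-- For every vertex `x` of a finite graph `G` there exists an L-Grundy dominating
sequence of `G` containing `x`. -/
theorem exists_LGrundyDomSeq_containing {V : Type*} [Fintype V] (G : SimpleGraph V)
    (x : V) :
    ∃ l : List V, IsLGrundyDomSeq G l ∧ x ∈ l := by
  obtain ⟨l, hl, hmax⟩ := exists_isLGrundyDomSeq G
  by_cases hxl : x ∈ l
  · exact ⟨l, ⟨hl, hmax⟩, hxl⟩
  have hpos : 0 < l.length := hmax [x] (isLSeq_singleton G x)
  obtain ⟨i, hi, hset⟩ := hl.exists_set_isLSeq hxl hpos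
  refine ⟨l.set i x, ⟨hset, fun l' hl' => ?_⟩, ?_⟩
  · simpa using hmax l' hl'
  · exact List.mem_set hi x
end
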